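/- arXiv:1002.2703 — 8 statements merged into one kernel-verified Lean document; each statement's English description precedes it below -/
import Mathlib

section
/- If c is a closure operation on submodules of a module M over a Noetherian local ring (R,m) that admits a special part csp (satisfying the four axioms), then c is a Nakayama closure: whenever K ⊆ L ⊆ M are submodules with L ⊆ (K + mL)^c_M, it follows that K^c_M = L^c_M. -/
/-- If a closure operation `c` on submodules of a module `M` over a
Noetherian local ring `(R, m)` admits a special part `csp` (satisfying the four axioms),
then `c` is a Nakayama closure: whenever `K ⊆ L` are submodules with
`L ⊆ (K + m•L)^c`, it follows that `K^c = L^c`. -/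
theorem special_part_implies_nakayama
    {R : Type*} [CommRing R] [IsNoetherianRing R] [IsLocalRing R]
    {M : Type*} [AddCommGroup M] [Module R M]
    (c : Submodule R M → Submodule R M)
    (hc_ext : ∀ L, L ≤ c L)
    (hc_idem : ∀ L, c (c L) = c L)
    (hc_mono : ∀ K L : Submodule R M, K ≤ L → c K ≤ c L)
    (csp : Submodule R M → Submodule R M)
    (hsp2 : ∀ L, (IsLocalRing.maximalIdeal R) • L ≤ csp L ∧ csp L ≤ c L)
    (hsp3 : ∀ L, csp (c L) = csp L ∧ c (csp L) = csp L)
    (hsp4 : ∀ L N : Submodule R M, L ≤ N → N ≤ c (L ⊔ csp N) → N ≤ c L)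
    (K L : Submodule R M) (hKL : K ≤ L)
    (h : L ≤ c (K ⊔ (IsLocalRing.maximalIdeal R) • L)) :
    c K = c L := by
  have hLcK : L ≤ c K := by
    apply hsp4 K L hKL
    exact h.trans (hc_mono _ _ (sup_le_sup_left (hsp2 L).1 K))
  apply le_antisymm (hc_mono _ _ hKL)
  calc c L ≤ c (c K) := hc_mono _ _ hLcK
    _ = c K := hc_idem K
end

section
/- If c is a closure operation on submodules of M admitting a special part csp, and L ⊆ M is a c-independent submodule (i.e., L has a generating set z_1,...,z_n such that z_i ∉ (Σ_{j≠i} R z_j)^c_M for all i), then L ∩ L^csp_M = mL. -/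
/-- If a closure operation `c` on submodules of `M` admits a special
part `csp`, and `L ⊆ M` is a `c`-independent submodule (i.e. `L` has a generating set
`z 1, …, z n` with `z i ∉ (Σ_{j ≠ i} R • z j)^c` for all `i`), then `L ∩ L^csp = m•L`. -/
theorem c_independent_inter_special_part
    {R : Type*} [CommRing R] [IsNoetherianRing R] [IsLocalRing R]
    {M : Type*} [AddCommGroup M] [Module R M]
    (c : Submodule R M → Submodule R M)
    (hc_ext : ∀ L, L ≤ c L)
    (hc_idem : ∀ L, c (c L) = c L)
    (hc_mono : ∀ K L : Submodule R M, K ≤ L → c K ≤ c L)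
    (csp : Submodule R M → Submodule R M)
    (hsp2 : ∀ L, (IsLocalRing.maximalIdeal R) • L ≤ csp L ∧ csp L ≤ c L)
    (hsp3 : ∀ L, csp (c L) = csp L ∧ c (csp L) = csp L)
    (hsp4 : ∀ L N : Submodule R M, L ≤ N → N ≤ c (L ⊔ csp N) → N ≤ c L)
    (L : Submodule R M)
    (hLind : ∃ (n : ℕ) (z : Fin n → M),
      Submodule.span R (Set.range z) = L ∧
      ∀ i : Fin n, z i ∉ c (Submodule.span R {x | ∃ j, j ≠ i ∧ x = z j})) :
    L ⊓ csp L = (IsLocalRing.maximalIdeal R) • L := by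
  obtain ⟨n, z, hspan, hind⟩ := hLind
  have hz : ∀ i, z i ∈ L := fun i => hspan ▸ Submodule.subset_span ⟨i, rfl⟩
  apply le_antisymm
  · rintro x ⟨hxL, hxcsp⟩
    rw [← hspan] at hxL
    obtain ⟨a, ha⟩ := Submodule.mem_span_range_iff_exists_fun R |>.1 hxL
    have ham : ∀ i, a i ∈ IsLocalRing.maximalIdeal R := by
      intro i
      by_contra hai
      have hunit : IsUnit (a i) := by
        by_contra h
        exact hai h
      obtain ⟨u, hu⟩ := hunit
      set Li := Submodule.span R {x | ∃ j, j ≠ i ∧ x = z j} with hLi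
      have hLiL : Li ≤ L := by
        rw [← hspan]
        apply Submodule.span_le.2
        rintro _ ⟨j, _, rfl⟩
        exact Submodule.subset_span ⟨j, rfl⟩
      have hsum : (∑ j ∈ Finset.univ.erase i, a j • z j) ∈ Li := by
        apply Submodule.sum_mem
        intro j hj
        exact Submodule.smul_mem _ _
          (Submodule.subset_span ⟨j, Finset.ne_of_mem_erase hj, rfl⟩)
      have h1 : (a i) • z i = x - ∑ j ∈ Finset.univ.erase i, a j • z j := by
        rw [← ha, ← Finset.add_sum_erase _ _ (Finset.mem_univ i)]
        abel
      have hzi : z i ∈ Li ⊔ csp L := by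
        have hmem : (a i) • z i ∈ Li ⊔ csp L := by
          rw [h1]
          exact Submodule.sub_mem _ (Submodule.mem_sup_right hxcsp)
            (Submodule.mem_sup_left hsum)
        have : (↑u⁻¹ : R) • ((a i) • z i) = z i := by
          rw [smul_smul, ← hu, Units.inv_mul, one_smul]
        rw [← this]
        exact Submodule.smul_mem _ _ hmem
      have hLle : L ≤ c (Li ⊔ csp L) := by
        nth_rewrite 1 [← hspan]
        apply Submodule.span_le.2
        rintro _ ⟨j, rfl⟩
        by_cases hji : j = i
        · subst hji
          exact hc_ext _ hzi
        · exact hc_ext _ (Submodule.mem_sup_left (Submodule.subset_span ⟨j, hji, rfl⟩))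
      have := hsp4 Li L hLiL hLle
      exact hind i (this (hz i))
    rw [← ha]
    exact Submodule.sum_mem _ fun j _ => Submodule.smul_mem_smul (ham j) (hz j)
  · exact le_inf (Submodule.smul_le_right) (hsp2 L).1
end

section
/- Let (R,m) be a Noetherian local ring of prime characteristic p and N ⊆ M finitely generated R-modules. The special part of Frobenius closure, N^Fsp_M = { z ∈ M : there exists a power q = p^e with z^q ∈ m·N^[q]_M }, is a submodule of M. -/
open TensorProduct

/-- `R` viewed as an `R`-algebra via the `e`-th iterate of the Frobenius endomorphism. -/
def FrobTwist (R : Type*) [CommRing R] (p : ℕ) [Fact p.Prime] [CharP R p] (_e : ℕ) :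
    Type _ := R

instance (R : Type*) [CommRing R] (p : ℕ) [Fact p.Prime] [CharP R p] (e : ℕ) :
    CommRing (FrobTwist R p e) := ‹CommRing R›

noncomputable instance (R : Type*) [CommRing R] (p : ℕ) [Fact p.Prime] [CharP R p] (e : ℕ) :
    Algebra R (FrobTwist R p e) := (iterateFrobenius R p e).toAlgebra

/-- The `e`-th Frobenius functor applied to the `R`-module `M`:
`F^e(M) = FrobTwist R p e ⊗[R] M`, a module over `FrobTwist R p e` (which is `R` as a ring). -/
def FrobModule (R : Type*) [CommRing R] (p : ℕ) [Fact p.Prime] [CharP R p]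
    (M : Type*) [AddCommGroup M] [Module R M] (e : ℕ) : Type _ :=
  FrobTwist R p e ⊗[R] M

section
variable (R : Type*) [CommRing R] (p : ℕ) [Fact p.Prime] [CharP R p]
  (M : Type*) [AddCommGroup M] [Module R M] (e : ℕ)

noncomputable instance : AddCommGroup (FrobModule R p M e) :=
  inferInstanceAs (AddCommGroup (FrobTwist R p e ⊗[R] M))

noncomputable instance : Module (FrobTwist R p e) (FrobModule R p M e) :=
  inferInstanceAs (Module (FrobTwist R p e) (FrobTwist R p e ⊗[R] M))

/-- The image `z^q := F^e(z)` of `z ∈ M` in `F^e(M)`. -/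
noncomputable def frobMap (z : M) : FrobModule R p M e := (1 : FrobTwist R p e) ⊗ₜ[R] z

/-- The Frobenius power `N^{[q]}_M ⊆ F^e(M)` of a submodule `N ⊆ M`, `q = p^e`. -/
noncomputable def frobPow (N : Submodule R M) : Submodule (FrobTwist R p e) (FrobModule R p M e) :=
  Submodule.span (FrobTwist R p e) (frobMap R p M e '' N)

/-- An ideal of `R`, regarded as an ideal of `FrobTwist R p e` (the same ring). -/
def idealTwist (I : Ideal R) : Ideal (FrobTwist R p e) := I

/-- The Frobenius closure `N^F_M` of a submodule `N ⊆ M`, as a set. -/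
noncomputable def frobClSet (N : Submodule R M) : Set M :=
  {z | ∃ e : ℕ, frobMap R p M e z ∈ frobPow R p M e N}

/-- The special part of the Frobenius closure `N^{Fsp}_M`, as a set:
elements `z` with `z^q ∈ m·N^{[q]}_M` for some `q = p^e`. -/
noncomputable def frobSpSet [IsLocalRing R] (N : Submodule R M) : Set M :=
  {z | ∃ e : ℕ, frobMap R p M e z ∈
    idealTwist R p e (IsLocalRing.maximalIdeal R) • frobPow R p M e N}

end

/-! `z ↦ z^q` is additive with `(r z)^q = r^q z^q`, so the only issue is closure under addition,
where the exponents chosen for `z` and `w` must be aligned. The Frobenius `R → R` induces a map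
`F^e(M) → F^{e+1}(M)`, semilinear along Frobenius, sending `z^q` to `z^{pq}` and `I·N^{[q]}_M`
into `I·N^{[pq]}_M` (as `a ∈ I ⇒ a^p ∈ I`); hence `z^q ∈ I·N^{[q]}_M` persists as `q` grows. -/

namespace AlgHom

variable {R A B : Type*} [CommRing R] [CommRing A] [CommRing B] [Algebra R A] [Algebra R B]
  (φ : A →ₐ[R] B) (M : Type*) [AddCommGroup M] [Module R M]

noncomputable def rTensorₛₗ : A ⊗[R] M →ₛₗ[(φ : A →+* B)] B ⊗[R] M where
  toFun := φ.toLinearMap.rTensor M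
  map_add' := map_add _
  map_smul' a t := by
    induction t using TensorProduct.induction_on with
    | zero => simp only [smul_zero, map_zero]
    | tmul x m => simp [TensorProduct.smul_tmul']
    | add s t hs ht => simp only [smul_add, map_add, hs, ht]

@[simp]
theorem rTensorₛₗ_tmul (a : A) (m : M) : φ.rTensorₛₗ M (a ⊗ₜ m) = φ a ⊗ₜ m := rfl

end AlgHom

theorem Submodule.smul_span_le_comap {A B P Q : Type*} [CommRing A] [CommRing B]
    [AddCommGroup P] [Module A P] [AddCommGroup Q] [Module B Q] {σ : A →+* B}
    (Φ : P →ₛₗ[σ] Q) {I : Ideal A} {J : Ideal B} (hIJ : I ≤ J.comap σ) {s : Set P} {t : Set Q}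
    (hst : Set.MapsTo Φ s t) :
    I • Submodule.span A s ≤ (J • Submodule.span B t).comap Φ := by
  refine Submodule.smul_le.mpr fun a ha x hx ↦ ?_
  rw [Submodule.mem_comap, map_smulₛₗ]
  refine Submodule.smul_mem_smul (hIJ ha) ?_
  exact (Submodule.span_le (p := (Submodule.span B t).comap Φ)).mpr
    (fun y hy ↦ Submodule.subset_span (hst hy)) hx

section
variable (R : Type*) [CommRing R] (p : ℕ) [Fact p.Prime] [CharP R p]
  (M : Type*) [AddCommGroup M] [Module R M]

noncomputable def frobTwistSucc (e : ℕ) : FrobTwist R p e →ₐ[R] FrobTwist R p (e + 1) where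
  toRingHom := frobenius R p
  commutes' r := by
    show frobenius R p (iterateFrobenius R p e r) = iterateFrobenius R p (e + 1) r
    simp only [frobenius_def, iterateFrobenius_def, ← pow_mul, pow_succ]

noncomputable def frobModuleSucc (e : ℕ) :
    FrobModule R p M e →ₛₗ[(frobTwistSucc R p e : FrobTwist R p e →+* FrobTwist R p (e + 1))]
      FrobModule R p M (e + 1) :=
  (frobTwistSucc R p e).rTensorₛₗ M

theorem frobModuleSucc_frobMap (e : ℕ) (z : M) :
    frobModuleSucc R p M e (frobMap R p M e z) = frobMap R p M (e + 1) z := by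
  show (frobTwistSucc R p e).rTensorₛₗ M (1 ⊗ₜ z) = (1 : FrobTwist R p (e + 1)) ⊗ₜ z
  rw [AlgHom.rTensorₛₗ_tmul, map_one]

variable {R p M}

theorem frobMap_mem_smul_frobPow_succ {I : Ideal R} {N : Submodule R M} {e : ℕ} {z : M}
    (hz : frobMap R p M e z ∈ idealTwist R p e I • frobPow R p M e N) :
    frobMap R p M (e + 1) z ∈ idealTwist R p (e + 1) I • frobPow R p M (e + 1) N := by
  have hI : idealTwist R p e I ≤ (idealTwist R p (e + 1) I).comap (frobTwistSucc R p e) :=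
    fun a ha ↦ I.pow_mem_of_mem ha p (Fact.out : p.Prime).pos
  have hN : Set.MapsTo (frobModuleSucc R p M e) (frobMap R p M e '' N)
      (frobMap R p M (e + 1) '' N) := by
    rintro _ ⟨n, hn, rfl⟩
    exact ⟨n, hn, (frobModuleSucc_frobMap R p M e n).symm⟩
  have := Submodule.smul_span_le_comap (frobModuleSucc R p M e) hI hN hz
  rwa [Submodule.mem_comap, frobModuleSucc_frobMap] at this

theorem frobMap_mem_smul_frobPow_mono {I : Ideal R} {N : Submodule R M} {e e' : ℕ} {z : M}
    (he : e ≤ e') (hz : frobMap R p M e z ∈ idealTwist R p e I • frobPow R p M e N) :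
    frobMap R p M e' z ∈ idealTwist R p e' I • frobPow R p M e' N := by
  induction e', he using Nat.le_induction with
  | base => exact hz
  | succ k _ ih => exact frobMap_mem_smul_frobPow_succ ih

theorem frobMap_zero (e : ℕ) : frobMap R p M e 0 = 0 :=
  TensorProduct.tmul_zero _ _

theorem frobMap_add (e : ℕ) (z w : M) :
    frobMap R p M e (z + w) = frobMap R p M e z + frobMap R p M e w :=
  TensorProduct.tmul_add _ _ _

theorem frobMap_smul (e : ℕ) (r : R) (z : M) :
    frobMap R p M e (r • z) = algebraMap R (FrobTwist R p e) r • frobMap R p M e z :=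
  (TensorProduct.tmul_smul r (1 : FrobTwist R p e) z).trans
    (algebraMap_smul (FrobTwist R p e) r ((1 : FrobTwist R p e) ⊗ₜ[R] z)).symm

variable (R p M) in
noncomputable def idealFrobClosure (I : Ideal R) (N : Submodule R M) : Submodule R M where
  carrier := {z | ∃ e : ℕ, frobMap R p M e z ∈ idealTwist R p e I • frobPow R p M e N}
  zero_mem' := ⟨0, by rw [frobMap_zero]; exact zero_mem _⟩
  add_mem' := by
    rintro z w ⟨e₁, hz⟩ ⟨e₂, hw⟩
    refine ⟨max e₁ e₂, ?_⟩
    rw [frobMap_add]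
    exact add_mem (frobMap_mem_smul_frobPow_mono (le_max_left _ _) hz)
      (frobMap_mem_smul_frobPow_mono (le_max_right _ _) hw)
  smul_mem' := by
    rintro r z ⟨e, hz⟩
    refine ⟨e, ?_⟩
    rw [frobMap_smul]
    exact Submodule.smul_mem _ _ hz

end

theorem frobSp_isSubmodule_general
    (R : Type*) [CommRing R] [IsLocalRing R]
    (p : ℕ) [Fact p.Prime] [CharP R p]
    (M : Type*) [AddCommGroup M] [Module R M]
    (N : Submodule R M) :
    ∃ S : Submodule R M, (S : Set M) = frobSpSet R p M N :=
  ⟨idealFrobClosure R p M (IsLocalRing.maximalIdeal R) N, rfl⟩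

/-- Over a Noetherian local ring `(R,m)` of prime characteristic `p`,
for finitely generated modules `N ⊆ M`, the special part of Frobenius closure
`N^{Fsp}_M = {z ∈ M | ∃ q = p^e, z^q ∈ m·N^{[q]}_M}` is a submodule of `M`. -/
theorem frobSp_isSubmodule
    (R : Type*) [CommRing R] [IsNoetherianRing R] [IsLocalRing R]
    (p : ℕ) [Fact p.Prime] [CharP R p]
    (M : Type*) [AddCommGroup M] [Module R M] [Module.Finite R M]
    (N : Submodule R M) :
    ∃ S : Submodule R M, (S : Set M) = frobSpSet R p M N :=
  frobSp_isSubmodule_general R p M N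
end

section
/- Let (R,m) be Noetherian local of characteristic p > 0, N ⊆ M finitely generated modules, and L a minimal F-reduction of N in M (L ⊆ N, L^F_M = N^F_M, and no proper submodule of L has this property). Then the minimal number of generators of L equals the minimal number of generators of N^[q]_M for all sufficiently large powers q of p. Consequently all minimal F-reductions of N have the same minimal number of generators. -/
open TensorProduct

/-- The minimal number of generators of a submodule. -/
noncomputable def minGens {A : Type*} [Semiring A] {X : Type*} [AddCommMonoid X]
    [Module A X] (L : Submodule A X) : ℕ :=
  sInf {k | ∃ s : Finset X, s.card = k ∧ Submodule.span A (s : Set X) = L}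

/-! For large `q` the Frobenius powers `N^[q]` and `L^[q]` agree: `N` is finitely generated and
each of its generators `z` lies in `L^F`, so `z^q ∈ L^[q]` for all large `q`. It therefore suffices
that `L^[q]` needs as many generators as `L` for every `q`. If it needed fewer, the `q`-th powers of
a minimal generating set of `L` would be a generating family of `L^[q]` that is too large, and
over a local ring such a family has a redundant member (Nakayama: count dimensions in
`k ⊗ L^[q]`). Dropping the corresponding generator of `L` gives `L' < L` with `L'^[q] = L^[q]`,
hence `L'^F = L^F`, contradicting minimality. -/

open Submodule in
theorem minGens_eq_spanFinrank {A : Type*} [Semiring A] {X : Type*} [AddCommMonoid X]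
    [Module A X] (L : Submodule A X) : minGens L = L.spanFinrank := by
  rw [spanFinrank_eq_iInf, iInf, minGens]
  congr 1
  ext k
  constructor
  · rintro ⟨s, rfl, hs⟩
    exact ⟨⟨s, hs⟩, rfl⟩
  · rintro ⟨s, rfl⟩
    exact ⟨s.1, rfl, s.2⟩

open Submodule Set Module in
theorem exists_span_image_compl_eq_top_of_finrank_lt {K V ι : Type*} [DivisionRing K]
    [AddCommGroup V] [Module K V] [Module.Finite K V] [Fintype ι] {w : ι → V}
    (hw : span K (range w) = ⊤) (h : finrank K V < Fintype.card ι) :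
    ∃ i, span K (w '' {i}ᶜ) = ⊤ := by
  have hw_dep : ¬ LinearIndependent K w := fun hli => h.not_ge hli.fintype_card_le_finrank
  obtain ⟨i, hi⟩ : ∃ i, w i ∈ span K (w '' {i}ᶜ) := by
    simpa [linearIndependent_iff_notMem_span, compl_eq_univ_sdiff] using hw_dep
  refine ⟨i, eq_top_iff.2 (hw ▸ span_le.2 ?_)⟩
  rintro _ ⟨j, rfl⟩
  by_cases hj : j = i
  · exact hj ▸ hi
  · exact subset_span ⟨j, hj, rfl⟩

namespace IsLocalRing

open Submodule Set Module TensorProduct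

variable {A X ι : Type*} [CommRing A] [IsLocalRing A] [AddCommGroup X] [Module A X]

theorem span_eq_top_iff_span_one_tmul_eq_top [Module.Finite A X] (v : ι → X) (S : Set ι) :
    span A (v '' S) = ⊤ ↔
      span (ResidueField A) ((fun i => (1 : ResidueField A) ⊗ₜ[A] v i) '' S) = ⊤ := by
  rw [← map_tensorProduct_mk_eq_top, map_span, ← restrictScalars_span A _ residue_surjective,
    restrictScalars_eq_top_iff, ← image_comp]
  rfl

theorem exists_span_image_compl_eq_top [Module.Finite A X] [Fintype ι] {v : ι → X}
    (hv : span A (range v) = ⊤)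
    (h : finrank (ResidueField A) (ResidueField A ⊗[A] X) < Fintype.card ι) :
    ∃ i, span A (v '' {i}ᶜ) = ⊤ := by
  rw [← image_univ, span_eq_top_iff_span_one_tmul_eq_top, image_univ] at hv
  obtain ⟨i, hi⟩ := exists_span_image_compl_eq_top_of_finrank_lt hv h
  exact ⟨i, (span_eq_top_iff_span_one_tmul_eq_top v _).2 hi⟩

theorem exists_span_image_compl_eq [Fintype ι] (v : ι → X)
    (h : (span A (range v)).spanFinrank < Fintype.card ι) :
    ∃ i, span A (v '' {i}ᶜ) = span A (range v) := by
  set P := span A (range v)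
  let v' : ι → P := fun i => ⟨v i, subset_span (mem_range_self i)⟩
  have map_span_v' (S : Set ι) : (span A (v' '' S)).map P.subtype = span A (v '' S) := by
    rw [map_span, ← image_comp]
    rfl
  have hP : P.FG := fg_span (finite_range v)
  have : Module.Finite A P := Module.Finite.iff_fg.2 hP
  have hv' : span A (range v') = ⊤ := by
    apply map_injective_of_injective P.injective_subtype
    rw [← image_univ, map_span_v', image_univ, Submodule.map_top, range_subtype]
  rw [← spanFinrank_top_eq_of_residueField P hP, ← finrank_eq_spanFinrank_of_free] at h
  obtain ⟨i, hi⟩ := exists_span_image_compl_eq_top hv' h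
  refine ⟨i, ?_⟩
  rw [← map_span_v', hi, Submodule.map_top, range_subtype]

end IsLocalRing

namespace Submodule

open TensorProduct

variable {R A B M : Type*} [CommSemiring R] [CommSemiring A] [CommSemiring B] [Algebra R A]
  [Algebra R B] [AddCommMonoid M] [Module R M]

theorem rTensor_mem_baseChange (φ : A →ₐ[R] B) {Q : Submodule R M} {y : A ⊗[R] M}
    (hy : y ∈ Q.baseChange A) : φ.toLinearMap.rTensor M y ∈ Q.baseChange B := by
  obtain ⟨w, rfl⟩ := hy
  refine ⟨φ.toLinearMap.rTensor Q w, ?_⟩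
  change (Q.subtype.lTensor B ∘ₗ φ.toLinearMap.rTensor Q) w =
    (φ.toLinearMap.rTensor M ∘ₗ Q.subtype.lTensor A) w
  rw [LinearMap.lTensor_comp_rTensor, LinearMap.rTensor_comp_lTensor]

theorem one_tmul_mem_baseChange_of_algHom (φ : A →ₐ[R] B) {Q : Submodule R M} {z : M}
    (hz : (1 : A) ⊗ₜ[R] z ∈ Q.baseChange A) : (1 : B) ⊗ₜ[R] z ∈ Q.baseChange B := by
  simpa using rTensor_mem_baseChange φ hz

theorem baseChange_le_baseChange_of_algHom (φ : A →ₐ[R] B) {P Q : Submodule R M}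
    (h : P.baseChange A ≤ Q.baseChange A) : P.baseChange B ≤ Q.baseChange B := by
  rw [baseChange_eq_span, span_le]
  rintro _ ⟨z, hz, rfl⟩
  exact one_tmul_mem_baseChange_of_algHom φ (h (tmul_mem_baseChange_of_mem 1 hz))

end Submodule

section Frobenius

open Filter Submodule

variable (R : Type*) [CommRing R] (p : ℕ) [Fact p.Prime] [CharP R p]
  (M : Type*) [AddCommGroup M] [Module R M]

instance [IsLocalRing R] (e : ℕ) : IsLocalRing (FrobTwist R p e) :=
  inferInstanceAs (IsLocalRing R)

-- `F^(e+d)(M)` is the base change of `F^e(M)` along this map, so `z^q ∈ P^[q]` persists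
-- as `q` grows.
noncomputable def frobTwistHom (e d : ℕ) : FrobTwist R p e →ₐ[R] FrobTwist R p (e + d) :=
  AlgHom.mk (iterateFrobenius R p d) fun r => by
    change (r ^ p ^ e) ^ p ^ d = r ^ p ^ (e + d)
    rw [← pow_mul, ← pow_add]

variable {R p M}

theorem frobPow_eq_baseChange (e : ℕ) (N : Submodule R M) :
    frobPow R p M e N = N.baseChange (FrobTwist R p e) :=
  (baseChange_eq_span _ N).symm

theorem frobPow_span (e : ℕ) (S : Set M) :
    frobPow R p M e (span R S) = span (FrobTwist R p e) (frobMap R p M e '' S) := by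
  rw [frobPow_eq_baseChange, baseChange_span]
  rfl

theorem frobPow_mono (e : ℕ) {P Q : Submodule R M} (h : P ≤ Q) :
    frobPow R p M e P ≤ frobPow R p M e Q :=
  span_mono (Set.image_mono h)

theorem frobMap_mem_frobPow_of_le {e e' : ℕ} (he : e ≤ e') {P : Submodule R M} {z : M}
    (hz : frobMap R p M e z ∈ frobPow R p M e P) : frobMap R p M e' z ∈ frobPow R p M e' P := by
  obtain ⟨d, rfl⟩ := Nat.exists_eq_add_of_le he
  rw [frobPow_eq_baseChange] at hz ⊢
  exact one_tmul_mem_baseChange_of_algHom (frobTwistHom R p e d) hz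

theorem frobPow_le_frobPow_of_le {e e' : ℕ} (he : e ≤ e') {P Q : Submodule R M}
    (h : frobPow R p M e P ≤ frobPow R p M e Q) : frobPow R p M e' P ≤ frobPow R p M e' Q := by
  obtain ⟨d, rfl⟩ := Nat.exists_eq_add_of_le he
  rw [frobPow_eq_baseChange, frobPow_eq_baseChange] at h ⊢
  exact baseChange_le_baseChange_of_algHom (frobTwistHom R p e d) h

theorem mem_frobClSet_iff_eventually {P : Submodule R M} {z : M} :
    z ∈ frobClSet R p M P ↔ ∀ᶠ e in atTop, frobMap R p M e z ∈ frobPow R p M e P :=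
  ⟨fun ⟨e, hz⟩ => eventually_atTop.2 ⟨e, fun _ he => frobMap_mem_frobPow_of_le he hz⟩,
    fun h => h.exists⟩

theorem frobClSet_mono {P Q : Submodule R M} (h : P ≤ Q) :
    frobClSet R p M P ⊆ frobClSet R p M Q :=
  fun _ ⟨e, hz⟩ => ⟨e, frobPow_mono e h hz⟩

theorem frobClSet_subset_of_frobPow_le {e : ℕ} {P Q : Submodule R M}
    (h : frobPow R p M e P ≤ frobPow R p M e Q) : frobClSet R p M P ⊆ frobClSet R p M Q := by
  intro z hz
  rw [mem_frobClSet_iff_eventually] at hz ⊢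
  filter_upwards [hz, eventually_ge_atTop e] with e' hz' he'
  exact frobPow_le_frobPow_of_le he' h hz'

theorem eventually_frobPow_le {N L : Submodule R M} (hN : N.FG)
    (hNL : (N : Set M) ⊆ frobClSet R p M L) :
    ∀ᶠ e in atTop, frobPow R p M e N ≤ frobPow R p M e L := by
  obtain ⟨t, rfl⟩ := hN
  have h : ∀ z ∈ t, ∀ᶠ e in atTop, frobMap R p M e z ∈ frobPow R p M e L := fun z hz =>
    mem_frobClSet_iff_eventually.1 (hNL (subset_span hz))
  filter_upwards [(eventually_all_finset t).2 h] with e he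
  rw [frobPow_span, span_le]
  rintro _ ⟨z, hz, rfl⟩
  exact he z hz

theorem subset_frobClSet (N : Submodule R M) : (N : Set M) ⊆ frobClSet R p M N :=
  fun z hz => ⟨0, subset_span ⟨z, hz, rfl⟩⟩

theorem eventually_frobPow_eq_of_frobClSet_eq {N L : Submodule R M} (hN : N.FG) (hLN : L ≤ N)
    (hred : frobClSet R p M L = frobClSet R p M N) :
    ∀ᶠ e in atTop, frobPow R p M e N = frobPow R p M e L :=
  (eventually_frobPow_le hN (hred ▸ subset_frobClSet N)).mono fun e he =>
    he.antisymm (frobPow_mono e hLN)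

theorem spanFinrank_frobPow_eq [IsLocalRing R] {L : Submodule R M} (hL : L.FG)
    (hmin : ∀ P < L, frobClSet R p M P ≠ frobClSet R p M L) (e : ℕ) :
    (frobPow R p M e L).spanFinrank = L.spanFinrank := by
  classical
  refine le_antisymm ?_ (not_lt.1 fun hlt => ?_)
  · rw [frobPow_eq_baseChange]
    exact hL.spanFinrank_baseChange_le
  obtain ⟨s, hcard, rfl⟩ := hL.exists_span_finset_card_eq_spanFinrank
  let v : s → FrobModule R p M e := fun x => frobMap R p M e x
  have hv : span _ (Set.range v) = frobPow R p M e (span R s) := by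
    rw [frobPow_span, Set.image_eq_range]
    rfl
  obtain ⟨x, hx⟩ := IsLocalRing.exists_span_image_compl_eq v (by rwa [hv, Fintype.card_coe, hcard])
  set L' := span R ((s.erase x : Finset M) : Set M)
  have hL'le : L' ≤ span R s := span_mono (Finset.erase_subset _ _)
  have hfrob : frobPow R p M e (span R s) ≤ frobPow R p M e L' := by
    rw [← hv, ← hx, frobPow_span]
    refine span_mono ?_
    rintro _ ⟨y, hy, rfl⟩
    exact ⟨y, Finset.mem_erase.2 ⟨Subtype.coe_ne_coe.2 hy, y.2⟩, rfl⟩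
  have hL'lt : L' < span R s := by
    refine lt_of_le_of_ne hL'le fun heq => ?_
    have : L'.spanFinrank ≤ _ := spanFinrank_span_le_ncard_of_finite (s.erase x).finite_toSet
    rw [heq, Set.ncard_coe_finset, Finset.card_erase_of_mem x.2] at this
    omega
  exact hmin L' hL'lt ((frobClSet_mono hL'le).antisymm (frobClSet_subset_of_frobPow_le hfrob))

theorem eventually_minGens_frobPow_eq [IsNoetherianRing R] [IsLocalRing R] [Module.Finite R M]
    {N L : Submodule R M} (hLN : L ≤ N) (hred : frobClSet R p M L = frobClSet R p M N)
    (hmin : ∀ P < L, frobClSet R p M P ≠ frobClSet R p M N) :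
    ∀ᶠ e in atTop, minGens (frobPow R p M e N) = minGens L := by
  filter_upwards [eventually_frobPow_eq_of_frobClSet_eq (IsNoetherian.noetherian N) hLN hred]
    with e he
  rw [he, minGens_eq_spanFinrank, minGens_eq_spanFinrank,
    spanFinrank_frobPow_eq (IsNoetherian.noetherian L) (hred ▸ hmin) e]

end Frobenius

/-- (Frobenius closure has spread.) Let `(R,m)` be Noetherian local of
characteristic `p > 0`, `N ⊆ M` finitely generated modules, and `L` a minimal
`F`-reduction of `N` in `M`.  Then the minimal number of generators of `L` equals the
minimal number of generators of `N^{[q]}_M` for all sufficiently large `q = p^e`;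
consequently every minimal `F`-reduction of `N` has the same minimal number of
generators as `L`. -/
theorem frobenius_spread
    (R : Type*) [CommRing R] [IsNoetherianRing R] [IsLocalRing R]
    (p : ℕ) [Fact p.Prime] [CharP R p]
    (M : Type*) [AddCommGroup M] [Module R M] [Module.Finite R M]
    (N L : Submodule R M) (hLN : L ≤ N)
    (hred : frobClSet R p M L = frobClSet R p M N)
    (hmin : ∀ P : Submodule R M, P < L → frobClSet R p M P ≠ frobClSet R p M N) :
    (∃ e₀ : ℕ, ∀ e ≥ e₀, minGens (frobPow R p M e N) = minGens L) ∧
    (∀ L' : Submodule R M, L' ≤ N →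
      frobClSet R p M L' = frobClSet R p M N →
      (∀ P : Submodule R M, P < L' → frobClSet R p M P ≠ frobClSet R p M N) →
      minGens L' = minGens L) := by
  have hL := eventually_minGens_frobPow_eq hLN hred hmin
  refine ⟨Filter.eventually_atTop.1 hL, fun L' hL'N hred' hmin' => ?_⟩
  obtain ⟨e, he, he'⟩ := (hL.and (eventually_minGens_frobPow_eq hL'N hred' hmin')).exists
  exact he'.symm.trans he
end

section
/- Let (R,m) be a Noetherian local ring and I a proper ideal. The special part of the integral closure, I^{-sp} := { x ∈ R : x^n ∈ integral closure of (m·I^n) for some n ≥ 1 }, is an ideal of R. -/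
/-- The integral closure `J̄` of an ideal `J`: elements `x` satisfying an equation
`x ^ k + a 1 * x ^ (k-1) + ⋯ + a k = 0` with `a i ∈ J ^ i`. -/
def intCl {R : Type*} [CommRing R] (J : Ideal R) : Set R :=
  {x | ∃ k : ℕ, 0 < k ∧ ∃ a : ℕ → R, (∀ i, 1 ≤ i → i ≤ k → a i ∈ J ^ i) ∧
    x ^ k + ∑ i ∈ Finset.Icc 1 k, a i * x ^ (k - i) = 0}

/-- The special part of the integral closure of an ideal `I` of a local ring `(R,m)`:
`I^{-sp} = {x | x ^ n ∈ (m * I ^ n)‾ for some n ≥ 1}`. -/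
def spIntCl {R : Type*} [CommRing R] [IsLocalRing R] (I : Ideal R) : Set R :=
  {x | ∃ n : ℕ, 1 ≤ n ∧ x ^ n ∈ intCl (IsLocalRing.maximalIdeal R * I ^ n)}

open Polynomial

section Aux

variable {R : Type*} [CommRing R]

lemma intCl_mono {J K : Ideal R} (h : J ≤ K) : intCl J ⊆ intCl K := by
  rintro x ⟨k, hk, a, ha, heq⟩
  exact ⟨k, hk, a, fun i h1 h2 => Ideal.pow_right_mono h i (ha i h1 h2), heq⟩

lemma C_mul_X_pow_mem_reesAlgebra {J : Ideal R} {m : ℕ} {a : R} (ha : a ∈ J ^ m) :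
    (C a * X ^ m : R[X]) ∈ reesAlgebra J := by
  rw [C_mul_X_pow_eq_monomial]
  exact reesAlgebra.monomial_mem.2 ha

lemma pow_C_mul_X_pow (x : R) (n j : ℕ) :
    ((C x * X ^ n : R[X])) ^ j = C (x ^ j) * X ^ (n * j) := by
  rw [mul_pow, ← C_pow, ← pow_mul]

/-- Translation: `x ∈ intCl (J ^ n)` iff `x·Xⁿ` is integral over the Rees algebra of `J`. -/
lemma mem_intCl_pow_iff {J : Ideal R} {n : ℕ} (hn : 0 < n) (x : R) :
    x ∈ intCl (J ^ n) ↔ IsIntegral (reesAlgebra J) (C x * X ^ n : R[X]) := by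
  constructor
  · rintro ⟨k, hk, a, ha, heq⟩
    classical
    have hmem : ∀ i, 1 ≤ i → i ≤ k → (C (a i) * X ^ (n * i) : R[X]) ∈ reesAlgebra J :=
      fun i h1 h2 => C_mul_X_pow_mem_reesAlgebra (by rw [pow_mul]; exact ha i h1 h2)
    set b : ℕ → (reesAlgebra J) := fun i =>
      if h : 1 ≤ i ∧ i ≤ k then ⟨C (a i) * X ^ (n * i), hmem i h.1 h.2⟩ else 0 with hb
    refine ⟨X ^ k + ∑ i ∈ Finset.Icc 1 k, Polynomial.C (b i) * X ^ (k - i), ?_, ?_⟩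
    · apply monic_X_pow_add
      refine lt_of_le_of_lt (degree_sum_le _ _) ?_
      rw [Finset.sup_lt_iff (by exact_mod_cast WithBot.bot_lt_coe k)]
      intro i hi
      rw [Finset.mem_Icc] at hi
      refine lt_of_le_of_lt (degree_C_mul_X_pow_le _ _) ?_
      exact_mod_cast (by omega : k - i < k)
    · rw [eval₂_add, eval₂_X_pow, eval₂_finset_sum]
      have hstep : ∀ i ∈ Finset.Icc 1 k,
          eval₂ (algebraMap (reesAlgebra J) R[X]) (C x * X ^ n)
            (Polynomial.C (b i) * X ^ (k - i))
          = C (a i * x ^ (k - i)) * X ^ (n * k) := by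
        intro i hi
        rw [Finset.mem_Icc] at hi
        rw [eval₂_mul, eval₂_C, eval₂_X_pow, pow_C_mul_X_pow]
        have hbi : (algebraMap (reesAlgebra J) R[X]) (b i) = C (a i) * X ^ (n * i) := by
          rw [hb]; simp only [dif_pos (And.intro hi.1 hi.2)]; rfl
        rw [hbi, mul_mul_mul_comm, ← C_mul, ← pow_add]
        congr 2
        rw [← Nat.mul_add]
        congr 1
        omega
      rw [Finset.sum_congr rfl hstep, ← Finset.sum_mul, ← map_sum, pow_C_mul_X_pow,
        ← add_mul, ← C_add, heq, map_zero, zero_mul]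
  · rintro ⟨p, hp, heq⟩
    by_cases hsub : Subsingleton R
    · exact ⟨1, one_pos, fun _ => 0, fun i _ _ => Ideal.zero_mem _, Subsingleton.elim _ _⟩
    have : Nontrivial R := not_subsingleton_iff_nontrivial.mp hsub
    set k := p.natDegree with hkdef
    have hk0 : 0 < k := by
      rcases Nat.eq_zero_or_pos k with h0 | h0
      · exfalso
        have hp1 : p = 1 := hp.natDegree_eq_zero.mp h0
        rw [hp1] at heq
        simp at heq
      · exact h0
    have hz : ∀ j : ℕ, ((C x * X ^ n : R[X])) ^ j = C (x ^ j) * X ^ (n * j) :=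
      pow_C_mul_X_pow x n
    rw [eval₂_eq_sum_range] at heq
    have h1 := congrArg (fun q : R[X] => q.coeff (n * k)) heq
    simp only [finset_sum_coeff, coeff_zero] at h1
    have hterm : ∀ i ∈ Finset.range (k + 1),
        ((algebraMap (reesAlgebra J) R[X]) (p.coeff i) * (C x * X ^ n) ^ i).coeff (n * k)
          = ((p.coeff i : R[X])).coeff (n * (k - i)) * x ^ i := by
      intro i hi
      rw [Finset.mem_range] at hi
      have hile : i ≤ k := by omega
      rw [hz i, ← mul_assoc, coeff_mul_X_pow', if_pos (Nat.mul_le_mul_left n hile),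
        coeff_mul_C]
      have harith : n * (k - i) = n * k - n * i := by
        have h2 : n * (k - i) + n * i = n * k := by
          rw [← Nat.mul_add]; congr 1; omega
        omega
      rw [harith]
      rfl
    rw [Finset.sum_congr rfl hterm, Finset.sum_range_succ] at h1
    have htop : ((p.coeff k : R[X])).coeff (n * (k - k)) * x ^ k = x ^ k := by
      have : p.coeff k = 1 := hp.coeff_natDegree
      rw [this, Nat.sub_self, Nat.mul_zero]
      simp
    rw [htop] at h1
    refine ⟨k, hk0, fun j => ((p.coeff (k - j) : R[X])).coeff (n * j), ?_, ?_⟩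
    · intro j h1j h2j
      rw [← pow_mul]
      exact (p.coeff (k - j)).2 (n * j)
    · have hre : ∑ j ∈ Finset.Icc 1 k,
          ((p.coeff (k - j) : R[X])).coeff (n * j) * x ^ (k - j)
          = ∑ i ∈ Finset.range k, ((p.coeff i : R[X])).coeff (n * (k - i)) * x ^ i := by
        refine Finset.sum_nbij' (fun j => k - j) (fun i => k - i) ?_ ?_ ?_ ?_ ?_
        · intro a ha'; simp only [Finset.mem_Icc] at ha'; simp only [Finset.mem_range]; omega
        · intro a ha'; simp only [Finset.mem_range] at ha'; simp only [Finset.mem_Icc]; omega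
        · intro a ha'; simp only [Finset.mem_Icc] at ha'; omega
        · intro a ha'; simp only [Finset.mem_range] at ha'; omega
        · intro a ha'; simp only [Finset.mem_Icc] at ha'
          have hkka : k - (k - a) = a := by omega
          rw [hkka]
      rw [hre]
      linear_combination h1

end Aux

section Main

variable {R : Type*} [CommRing R] [IsLocalRing R]

lemma mul_mem_intCl {K : Ideal R} {z : R} (hz : z ∈ intCl K) (r : R) : r * z ∈ intCl K := by
  obtain ⟨k, hk, a, ha, heq⟩ := hz
  refine ⟨k, hk, fun i => r ^ i * a i,
    fun i h1 h2 => Ideal.mul_mem_left _ _ (ha i h1 h2), ?_⟩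
  have hstep : ∀ i ∈ Finset.Icc 1 k,
      r ^ i * a i * (r * z) ^ (k - i) = r ^ k * (a i * z ^ (k - i)) := by
    intro i hi
    rw [Finset.mem_Icc] at hi
    have hik : i + (k - i) = k := by omega
    calc r ^ i * a i * (r * z) ^ (k - i)
        = r ^ (i + (k - i)) * (a i * z ^ (k - i)) := by rw [mul_pow, pow_add]; ring
      _ = r ^ k * (a i * z ^ (k - i)) := by rw [hik]
  rw [Finset.sum_congr rfl hstep, ← Finset.mul_sum, mul_pow, ← mul_add, heq, mul_zero]

lemma pow_scale {I : Ideal R} {x : R} {n : ℕ} (hn : 0 < n)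
    (hx : x ^ n ∈ intCl (IsLocalRing.maximalIdeal R * I ^ n)) {d : ℕ} (hd : 0 < d) :
    x ^ (n * d) ∈ intCl (IsLocalRing.maximalIdeal R * I ^ (n * d)) := by
  set K := IsLocalRing.maximalIdeal R * I ^ n with hK
  have h1 : IsIntegral (reesAlgebra K) (C (x ^ n) * X ^ 1 : R[X]) := by
    rw [← mem_intCl_pow_iff one_pos, pow_one]
    exact hx
  have h2 := h1.pow d
  rw [pow_C_mul_X_pow, ← pow_mul, one_mul] at h2
  have h4 : x ^ (n * d) ∈ intCl (K ^ d) := (mem_intCl_pow_iff hd _).mpr h2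
  refine intCl_mono ?_ h4
  rw [hK, mul_pow, ← pow_mul]
  exact Ideal.mul_mono (Ideal.pow_le_self (by omega)) le_rfl

end Main

/-- For a proper ideal `I` of a Noetherian local ring `(R,m)`, the
special part of the integral closure `I^{-sp}` is an ideal of `R`. -/
theorem spIntCl_isIdeal
    {R : Type*} [CommRing R] [IsNoetherianRing R] [IsLocalRing R]
    (I : Ideal R) (hI : I ≠ ⊤) :
    ∃ J : Ideal R, (J : Set R) = spIntCl I := by
  classical
  refine ⟨{ carrier := spIntCl I, add_mem' := ?_, zero_mem' := ?_, smul_mem' := ?_ }, rfl⟩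
  · -- add_mem'
    rintro x y ⟨n, hn, hxn⟩ ⟨m, hm, hym⟩
    have hxN : x ^ (n * m) ∈ intCl (IsLocalRing.maximalIdeal R * I ^ (n * m)) :=
      pow_scale hn hxn hm
    have hyN : y ^ (n * m) ∈ intCl (IsLocalRing.maximalIdeal R * I ^ (n * m)) := by
      have := pow_scale hm hym hn
      rwa [Nat.mul_comm m n] at this
    set N := n * m with hN
    have hN0 : 0 < N := by positivity
    set J := IsLocalRing.maximalIdeal R * I ^ N with hJ
    have hz : IsIntegral (reesAlgebra J) (C (x ^ N) * X ^ 1 : R[X]) := by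
      rw [← mem_intCl_pow_iff one_pos, pow_one]; exact hxN
    have hw : IsIntegral (reesAlgebra J) (C (y ^ N) * X ^ 1 : R[X]) := by
      rw [← mem_intCl_pow_iff one_pos, pow_one]; exact hyN
    have key : ∀ i, i ≤ N →
        IsIntegral (reesAlgebra J) (C (x ^ i * y ^ (N - i)) * X ^ 1 : R[X]) := by
      intro i hi
      apply IsIntegral.of_pow hN0
      have heq : ((C (x ^ i * y ^ (N - i)) * X ^ 1 : R[X])) ^ N
          = (C (x ^ N) * X ^ 1 : R[X]) ^ i * (C (y ^ N) * X ^ 1 : R[X]) ^ (N - i) := by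
        rw [pow_C_mul_X_pow, pow_C_mul_X_pow, pow_C_mul_X_pow, mul_mul_mul_comm,
          ← C_mul, ← pow_add]
        have e1 : (x ^ i * y ^ (N - i)) ^ N = (x ^ N) ^ i * (y ^ N) ^ (N - i) := by
          rw [mul_pow, ← pow_mul, ← pow_mul, ← pow_mul, ← pow_mul,
            Nat.mul_comm i N, Nat.mul_comm (N - i) N]
        have e2 : 1 * N = 1 * i + 1 * (N - i) := by omega
        rw [e1, e2]
      rw [heq]
      exact (hz.pow i).mul (hw.pow (N - i))
    refine ⟨N, hN0, ?_⟩
    rw [← hJ, ← pow_one J, mem_intCl_pow_iff one_pos]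
    have hmem : ∀ i ∈ Finset.range (N + 1),
        (C (x ^ i * y ^ (N - i) * ((N.choose i : ℕ) : R)) * X ^ 1 : R[X])
          ∈ integralClosure (reesAlgebra J) R[X] := by
      intro i hi
      rw [Finset.mem_range] at hi
      have h5 : (C (x ^ i * y ^ (N - i)) * X ^ 1 : R[X])
          ∈ integralClosure (reesAlgebra J) R[X] :=
        (mem_integralClosure_iff _ _).mpr (key i (by omega))
      have hrw : (C (x ^ i * y ^ (N - i) * ((N.choose i : ℕ) : R)) * X ^ 1 : R[X])
          = (N.choose i) • (C (x ^ i * y ^ (N - i)) * X ^ 1 : R[X]) := by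
        rw [map_mul, map_natCast, nsmul_eq_mul]
        ring
      rw [hrw]
      exact nsmul_mem h5 _
    have hfinal : (C ((x + y) ^ N) * X ^ 1 : R[X])
        ∈ integralClosure (reesAlgebra J) R[X] := by
      rw [add_pow, map_sum, Finset.sum_mul]
      exact Subalgebra.sum_mem _ hmem
    exact (mem_integralClosure_iff _ _).mp hfinal
  · -- zero_mem'
    refine ⟨1, le_refl 1, 1, one_pos, fun _ => 0, fun i _ _ => Ideal.zero_mem _, by simp⟩
  · -- smul_mem'
    rintro r x ⟨n, hn, hxn⟩
    refine ⟨n, hn, ?_⟩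
    have : (r • x) ^ n = r ^ n * x ^ n := by rw [smul_eq_mul, mul_pow]
    rw [this]
    exact mul_mem_intCl hxn _
end

section
/- Let R be a commutative ring, v an (ℝ≥0 ∪ {∞})-valued valuation on R, and J a proper ideal. Then v(J̄) = v(J), where v(I) := inf { v(x) : x ∈ I } and J̄ is the integral closure of J. -/
open Finset ENNReal

namespace AddValuation

variable {R : Type*} [CommRing R]

theorem nsmul_le_map_of_mem_pow {Γ : Type*} [LinearOrderedAddCommMonoidWithTop Γ]
    (v : AddValuation R Γ) {I : Ideal R} {c : Γ} (hc : ∀ x ∈ I, c ≤ v x) {n : ℕ} (hn : 0 < n)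
    {y : R} (hy : y ∈ I ^ n) : n • c ≤ v y := by
  induction n, hn using Nat.le_induction generalizing y with
  | base => simpa using hc y (by simpa using hy)
  | succ n _ ih =>
    rw [pow_succ] at hy
    refine Submodule.mul_induction_on hy (fun m hm r hr => ?_) (fun _ _ => v.map_le_add)
    rw [v.map_mul, succ_nsmul]
    exact add_le_add (ih hm) (hc r hr)

theorem le_map_of_integral_equation {v : AddValuation R ℝ≥0∞} {c : ℝ≥0∞} {x : R} {k : ℕ}
    {a : ℕ → R} (ha : ∀ i ∈ Icc 1 k, i • c ≤ v (a i))
    (hx : x ^ k + ∑ i ∈ Icc 1 k, a i * x ^ (k - i) = 0) : c ≤ v x := by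
  by_contra! hlt
  have hfin : ∀ n : ℕ, n • v x ≠ ⊤ := fun n => by
    simpa [nsmul_eq_mul] using mul_ne_top (natCast_ne_top n) hlt.ne_top
  have hterm : ∀ i ∈ Icc 1 k, k • v x < v (a i * x ^ (k - i)) := by
    intro i hi
    obtain ⟨hi1, hik⟩ := mem_Icc.mp hi
    calc k • v x = i • v x + (k - i) • v x := by rw [← add_nsmul, Nat.add_sub_cancel' hik]
      _ < i • c + (k - i) • v x := by
        refine ENNReal.add_lt_add_right (hfin _) ?_
        simpa [nsmul_eq_mul] using
          ENNReal.mul_lt_mul_right (by positivity) (natCast_ne_top i) hlt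
      _ ≤ v (a i * x ^ (k - i)) := by
        rw [v.map_mul, v.map_pow]
        exact add_le_add_left (ha i hi) _
  have hsum := v.map_lt_sum (hfin k) hterm
  rw [← neg_eq_of_add_eq_zero_right hx, v.map_neg, v.map_pow] at hsum
  exact hsum.false

end AddValuation

theorem subset_intCl {R : Type*} [CommRing R] (J : Ideal R) : (J : Set R) ⊆ intCl J := by
  intro x hx
  refine ⟨1, one_pos, fun _ => -x, fun i h1 h2 => ?_, by simp⟩
  obtain rfl : i = 1 := le_antisymm h2 h1
  simpa using hx

theorem addValuation_intCl_general
    {R : Type*} [CommRing R] (v : AddValuation R ENNReal)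
    (J : Ideal R) :
    (⨅ x ∈ intCl J, v x) = ⨅ x ∈ J, v x := by
  refine le_antisymm (biInf_mono (subset_intCl J)) (le_iInf₂ fun x hx => ?_)
  obtain ⟨k, -, a, ha, hx⟩ := hx
  refine v.le_map_of_integral_equation (fun i hi => ?_) hx
  obtain ⟨hi1, hik⟩ := mem_Icc.mp hi
  exact v.nsmul_le_map_of_mem_pow (fun y hy => iInf₂_le y hy) hi1 (ha i hi1 hik)

/-- For any commutative ring `R`, any `(ℝ≥0 ∪ {∞})`-valued
(additive) valuation `v` on `R` and any proper ideal `J`, `v(J̄) = v(J)`, where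
`v(I) = inf {v x | x ∈ I}`. -/
theorem addValuation_intCl
    {R : Type*} [CommRing R] (v : AddValuation R ENNReal)
    (J : Ideal R) (hJ : J ≠ ⊤) :
    (⨅ x ∈ intCl J, v x) = ⨅ x ∈ J, v x :=
  addValuation_intCl_general v J
end

section
/- Let (R,m) be a Noetherian local ring, I a proper ideal, and x ∈ R. Then x^n ∈ I^{n+1} for some positive integer n if and only if x^r lies in the integral closure of I^{r+1} for some positive integer r. -/
lemma intCl_pow_mem {R : Type*} [CommRing R] {J : Ideal R} {y : R}
    (hy : y ∈ intCl J) : ∃ k : ℕ, 0 < k ∧ ∀ m : ℕ, y ^ m ∈ J ^ (m + 1 - k) := by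
  obtain ⟨k, hk, a, ha, heq⟩ := hy
  refine ⟨k, hk, ?_⟩
  intro m
  induction m using Nat.strong_induction_on with
  | _ m ih =>
    rcases lt_or_ge m k with hm | hm
    · have : m + 1 - k = 0 := by omega
      simp [this]
    · have h1 : y ^ k = -∑ i ∈ Finset.Icc 1 k, a i * y ^ (k - i) :=
        eq_neg_of_add_eq_zero_left heq
      have hym : y ^ m = ∑ i ∈ Finset.Icc 1 k, -(a i) * y ^ (m - i) := by
        have h2 : y ^ m = y ^ (m - k) * y ^ k := by
          rw [← pow_add]; congr 1; omega
        rw [h2, h1, mul_neg, Finset.mul_sum, ← Finset.sum_neg_distrib]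
        refine Finset.sum_congr rfl fun i hi => ?_
        simp only [Finset.mem_Icc] at hi
        have : y ^ (m - k) * y ^ (k - i) = y ^ (m - i) := by
          rw [← pow_add]; congr 1; omega
        rw [show y ^ (m - k) * (a i * y ^ (k - i)) = a i * (y ^ (m - k) * y ^ (k - i)) by ring, this]
        ring
      rw [hym]
      refine Ideal.sum_mem _ fun i hi => ?_
      simp only [Finset.mem_Icc] at hi
      have h3 : (-(a i)) * y ^ (m - i) ∈ J ^ i * J ^ (m - i + 1 - k) :=
        Ideal.mul_mem_mul (neg_mem (ha i hi.1 hi.2)) (ih (m - i) (by omega))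
      rw [← pow_add] at h3
      exact Ideal.pow_le_pow_right (by omega) h3

/-- For a proper ideal `I` of a Noetherian local ring and `x ∈ R`:
`x ^ n ∈ I ^ (n+1)` for some `n ≥ 1` iff `x ^ r ∈ (I ^ (r+1))‾` for some `r ≥ 1`. -/
theorem pow_mem_pow_succ_iff_intCl
    {R : Type*} [CommRing R] [IsNoetherianRing R] [IsLocalRing R]
    (I : Ideal R) (hI : I ≠ ⊤) (x : R) :
    (∃ n : ℕ, 0 < n ∧ x ^ n ∈ I ^ (n + 1)) ↔
    (∃ r : ℕ, 0 < r ∧ x ^ r ∈ intCl (I ^ (r + 1))) := by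
  constructor
  · rintro ⟨n, hn, hx⟩
    refine ⟨n, hn, 1, one_pos, fun _ => -(x ^ n), ?_, ?_⟩
    · intro i h1 h2
      have : i = 1 := le_antisymm h2 h1
      subst this
      simpa using neg_mem hx
    · simp
  · rintro ⟨r, hr, hx⟩
    obtain ⟨k, hk, hmem⟩ := intCl_pow_mem hx
    refine ⟨r * (k * (r + 1)), by positivity, ?_⟩
    have h := hmem (k * (r + 1))
    rw [← pow_mul, ← pow_mul] at h
    refine Ideal.pow_le_pow_right ?_ h
    have e1 : k * (r + 1) = k * r + k := by ring
    have e2 : (r + 1) * (k * (r + 1) + 1 - k) = (r+1) * (k * r + 1) := by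
      congr 1; omega
    rw [e2]
    have e3 : (r + 1) * (k * r + 1) = r * (k * (r + 1)) + r + 1 := by ring
    omega
end

section
/- In a Noetherian local ring (R,m) of prime characteristic p, for every proper ideal I the special part of tight closure is contained in the special part of integral closure: I^{*sp} ⊆ I^{-sp}. -/
/-- The `q`-th Frobenius power `I^{[q]}` of an ideal: the ideal generated by `q`-th powers
of elements of `I`. -/
def idealFrobPow {R : Type*} [CommRing R] (I : Ideal R) (q : ℕ) : Ideal R :=
  Ideal.span ((· ^ q) '' (I : Set R))

/-- The tight closure `I^*` of an ideal in a ring of characteristic `p`: `x ∈ I^*` iff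
there is `c` outside every minimal prime with `c * x ^ q ∈ I^{[q]}` for all large `q = p^e`. -/
def tightCl {R : Type*} [CommRing R] (p : ℕ) (I : Ideal R) : Set R :=
  {x | ∃ c : R, (∀ P ∈ minimalPrimes R, c ∉ P) ∧
    ∃ e₀ : ℕ, ∀ e ≥ e₀, c * x ^ p ^ e ∈ idealFrobPow I (p ^ e)}

/-- The special part of the tight closure of an ideal `I` of a local ring `(R,m)`:
`I^{*sp} = {x | x ^ q ∈ (m * I^{[q]})^* for some q = p^e}`. -/
def spTightCl {R : Type*} [CommRing R] [IsLocalRing R] (p : ℕ) (I : Ideal R) : Set R :=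
  {x | ∃ e : ℕ,
    x ^ p ^ e ∈ tightCl p (IsLocalRing.maximalIdeal R * idealFrobPow I (p ^ e))}

/-!
Tight closure lies in integral closure. Suppose `c * x ^ q ∈ K ^ q` for all large `q = p ^ e`,
with `c` outside the minimal primes. Modulo a minimal prime `P`, the elements `c * (x t) ^ q` of
the Noetherian Rees algebra `R[K t]` satisfy a linear relation; comparing coefficients of the top
power of `t` and cancelling `c` gives an equation of integral dependence of `x` over `K` modulo `P`.
Lifting these equations to `R` and multiplying them over the finitely many minimal primes yields a
monic polynomial whose value at `x` is nilpotent, and a power of it is an equation of integral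
dependence over `K`. The theorem is the case `K = m * I ^ q` applied to `x ^ q`, using
`I^{[q]} ⊆ I ^ q`.
-/

open Polynomial

section IntegralDependence
variable {R : Type*} [CommRing R] {J : Ideal R}

def IsIntDepPoly (J : Ideal R) (f : R[X]) : Prop :=
  f.Monic ∧ ∀ i, f.coeff i ∈ J ^ (f.natDegree - i)

theorem isIntDepPoly_one : IsIntDepPoly J 1 :=
  ⟨monic_one, fun i => by simp⟩

theorem IsIntDepPoly.mul {f g : R[X]} (hf : IsIntDepPoly J f) (hg : IsIntDepPoly J g) :
    IsIntDepPoly J (f * g) := by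
  refine ⟨hf.1.mul hg.1, fun i => ?_⟩
  rw [hf.1.natDegree_mul hg.1, coeff_mul]
  refine Ideal.sum_mem _ fun ⟨a, b⟩ hab => ?_
  rw [Finset.HasAntidiagonal.mem_antidiagonal] at hab
  refine Ideal.pow_le_pow_right
    (show f.natDegree + g.natDegree - i ≤ (f.natDegree - a) + (g.natDegree - b) by omega) ?_
  rw [pow_add]
  exact Ideal.mul_mem_mul (hf.2 a) (hg.2 b)

theorem IsIntDepPoly.pow {f : R[X]} (hf : IsIntDepPoly J f) (m : ℕ) : IsIntDepPoly J (f ^ m) := by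
  induction m with
  | zero => simpa using isIntDepPoly_one
  | succ m ih => rw [pow_succ]; exact ih.mul hf

theorem isIntDepPoly_prod {ι : Type*} (s : Finset ι) {f : ι → R[X]}
    (hf : ∀ i ∈ s, IsIntDepPoly J (f i)) : IsIntDepPoly J (∏ i ∈ s, f i) :=
  Finset.prod_induction f (IsIntDepPoly J) (fun _ _ => IsIntDepPoly.mul) isIntDepPoly_one hf

variable [Nontrivial R]

theorem isIntDepPoly_X : IsIntDepPoly J X :=
  ⟨monic_X, fun i => by rcases i with _ | _ | i <;> simp [coeff_X]⟩

theorem isIntDepPoly_X_pow_add_sum {ι : Type*} (d : ℕ) (s : Finset ι) (a : ι → R) (n : ι → ℕ)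
    (hn : ∀ i ∈ s, n i < d) (ha : ∀ i ∈ s, a i ∈ J ^ (d - n i)) :
    IsIntDepPoly J (X ^ d + ∑ i ∈ s, C (a i) * X ^ n i) := by
  have hdeg : (∑ i ∈ s, C (a i) * X ^ n i).degree < (d : WithBot ℕ) := by
    refine (degree_sum_le _ _).trans_lt ?_
    rw [Finset.sup_lt_iff (by exact_mod_cast WithBot.bot_lt_coe d)]
    exact fun i hi => (degree_C_mul_X_pow_le _ _).trans_lt (by exact_mod_cast hn i hi)
  refine ⟨monic_X_pow_add hdeg, fun j => ?_⟩
  rw [natDegree_add_eq_left_of_degree_lt (by rwa [degree_X_pow]), natDegree_X_pow, coeff_add,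
    finsetSum_coeff, coeff_X_pow]
  refine add_mem ?_ (Ideal.sum_mem _ fun i hi => ?_)
  · split_ifs with h
    · simp [h]
    · exact zero_mem _
  · rw [coeff_C_mul_X_pow]
    split_ifs with h
    · exact h ▸ ha i hi
    · exact zero_mem _

theorem mem_intCl_of_isIntDepPoly {f : R[X]} {x : R} (hf : IsIntDepPoly J f)
    (hx : f.eval x = 0) : x ∈ intCl J := by
  -- `X * f` has the positive degree that `intCl` demands
  obtain ⟨hm, hc⟩ := isIntDepPoly_X.mul hf
  set g := X * f
  set k := g.natDegree
  have hk : k = f.natDegree + 1 := by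
    simp only [k, g, monic_X.natDegree_mul hf.1, natDegree_X]; ring
  have hgx : g.eval x = 0 := by simp [g, hx]
  refine ⟨k, by omega, fun i => g.coeff (k - i),
    fun i _ hik => by simpa [Nat.sub_sub_self hik] using hc (k - i), ?_⟩
  have hrefl := Finset.sum_Ico_reflect (fun j => g.coeff j * x ^ j) 1 (le_refl (k + 1))
  simp only [Nat.sub_self, Nat.add_sub_cancel, Nat.Ico_zero_eq_range] at hrefl
  rw [← hgx, eval_eq_sum_range, Finset.sum_range_succ, hm.coeff_natDegree, one_mul, add_comm,
    ← Finset.Ico_add_one_right_eq_Icc, hrefl]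

theorem exists_isIntDepPoly_of_map_mem_intCl {S : Type*} [CommRing S] {φ : R →+* S}
    (hφ : Function.Surjective φ) {x : R} (hx : φ x ∈ intCl (J.map φ)) :
    ∃ f : R[X], IsIntDepPoly J f ∧ φ (f.eval x) = 0 := by
  obtain ⟨k, hk, a, ha, hax⟩ := hx
  have hlift : ∀ i, ∃ b, (i ∈ Finset.Icc 1 k → b ∈ J ^ i) ∧ φ b = a i := by
    intro i
    by_cases hi : i ∈ Finset.Icc 1 k
    · rw [Finset.mem_Icc] at hi
      have := ha i hi.1 hi.2
      rw [← Ideal.map_pow] at this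
      obtain ⟨b, hb, hba⟩ := (Ideal.mem_map_iff_of_surjective φ hφ).1 this
      exact ⟨b, fun _ => hb, hba⟩
    · obtain ⟨b, hb⟩ := hφ (a i)
      exact ⟨b, fun h => absurd h hi, hb⟩
  choose b hbJ hba using hlift
  refine ⟨X ^ k + ∑ i ∈ Finset.Icc 1 k, C (b i) * X ^ (k - i),
    isIntDepPoly_X_pow_add_sum k _ b _ (fun i hi => ?_) (fun i hi => ?_), ?_⟩
  · rw [Finset.mem_Icc] at hi; omega
  · rw [Nat.sub_sub_self (Finset.mem_Icc.1 hi).2]; exact hbJ i hi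
  · simpa [eval_finsetSum, hba] using hax

theorem mem_intCl_of_forall_minimalPrimes [IsNoetherianRing R] {x : R}
    (h : ∀ P ∈ minimalPrimes R, Ideal.Quotient.mk P x ∈ intCl (J.map (Ideal.Quotient.mk P))) :
    x ∈ intCl J := by
  have hf : ∀ P : minimalPrimes R, ∃ f : R[X], IsIntDepPoly J f ∧ f.eval x ∈ (P : Ideal R) := by
    intro ⟨P, hP⟩
    obtain ⟨f, hf, hfx⟩ :=
      exists_isIntDepPoly_of_map_mem_intCl Ideal.Quotient.mk_surjective (h P hP)
    exact ⟨f, hf, Ideal.Quotient.eq_zero_iff_mem.1 hfx⟩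
  choose f hf hfx using hf
  have := (minimalPrimes.finite_of_isNoetherianRing R).fintype
  set G := ∏ P, f P
  have hG : G.eval x ∈ (⊥ : Ideal R).radical := by
    rw [← Ideal.sInf_minimalPrimes, Submodule.mem_sInf]
    intro P hP
    exact Ideal.mem_of_dvd _ (eval_dvd (Finset.dvd_prod_of_mem f (Finset.mem_univ ⟨P, hP⟩)))
      (hfx ⟨P, hP⟩)
  obtain ⟨m, hm⟩ := hG
  exact mem_intCl_of_isIntDepPoly ((isIntDepPoly_prod _ fun P _ => hf P).pow m)
    (by rwa [eval_pow, ← Ideal.mem_bot])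

end IntegralDependence

theorem exists_eq_sum_mul_of_isNoetherianRing {A : Type*} [CommRing A] [IsNoetherianRing A]
    (v : ℕ → A) : ∃ n, ∃ g : Fin n → A, v n = ∑ i, g i * v i := by
  let N : ℕ →o Ideal A :=
    ⟨fun n => Ideal.span (Set.range fun i : Fin n => v i), fun m n hmn =>
      Ideal.span_mono fun _ ⟨i, hi⟩ => ⟨Fin.castLE hmn i, hi⟩⟩
  obtain ⟨n, hn⟩ := monotone_stabilizes_iff_noetherian.2 inferInstance N
  have : v n ∈ N (n + 1) := Ideal.subset_span ⟨Fin.last n, rfl⟩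
  rw [← hn (n + 1) n.le_succ] at this
  obtain ⟨g, hg⟩ := Ideal.mem_span_range_iff_exists_fun.1 this
  exact ⟨n, g, hg.symm⟩

section Rees
variable {R : Type*} [CommRing R] [IsNoetherianRing R] [Nontrivial R] {J : Ideal R}

theorem mem_intCl_of_mul_pow_mem {c x : R} (hc : c ∈ nonZeroDivisors R) {q : ℕ → ℕ}
    (hq : StrictMono q) (h : ∀ i, c * x ^ q i ∈ J ^ q i) : x ∈ intCl J := by
  -- a relation among the elements `c (x t) ^ q i` of the Noetherian Rees algebra `R[J t]`
  obtain ⟨n, g, hg⟩ := exists_eq_sum_mul_of_isNoetherianRing fun i =>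
    (⟨monomial (q i) (c * x ^ q i), reesAlgebra.monomial_mem.2 (h i)⟩ : reesAlgebra J)
  set b : Fin n → R := fun i => (g i : R[X]).coeff (q n - q i)
  have hqi : ∀ i : Fin n, q i < q n := fun i => hq i.2
  -- compare the coefficients of `t ^ q n`
  have hcoeff : c * x ^ q n = c * ∑ i, b i * x ^ q i := by
    have := congrArg (fun f : reesAlgebra J => (f : R[X]).coeff (q n)) hg
    simp only [coeff_monomial_same, AddSubmonoidClass.coe_finsetSum, MulMemClass.coe_mul,
      finsetSum_coeff] at this
    rw [this, Finset.mul_sum]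
    refine Finset.sum_congr rfl fun i _ => ?_
    rw [← Nat.sub_add_cancel (hqi i).le, coeff_mul_monomial]
    ring
  refine mem_intCl_of_isIntDepPoly (isIntDepPoly_X_pow_add_sum (q n) Finset.univ (fun i => -b i)
    (fun i => q i) (fun i _ => hqi i) fun i _ => neg_mem ((g i).2 _)) ?_
  simp [eval_finsetSum, (mul_cancel_left_mem_nonZeroDivisors hc).1 hcoeff]

end Rees

section TightClosure
variable {R : Type*} [CommRing R]

theorem idealFrobPow_le_pow (I : Ideal R) (q : ℕ) : idealFrobPow I q ≤ I ^ q :=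
  Ideal.span_le.2 <| by rintro _ ⟨a, ha, rfl⟩; exact Ideal.pow_mem_pow ha q

theorem idealFrobPow_mono {I J : Ideal R} (h : I ≤ J) (q : ℕ) :
    idealFrobPow I q ≤ idealFrobPow J q :=
  Ideal.span_mono (Set.image_mono h)

theorem tightCl_mono (p : ℕ) {I J : Ideal R} (h : I ≤ J) : tightCl p I ⊆ tightCl p J :=
  fun _ ⟨c, hc, e₀, hx⟩ => ⟨c, hc, e₀, fun e he => idealFrobPow_mono h _ (hx e he)⟩

theorem tightCl_subset_intCl [IsNoetherianRing R] [Nontrivial R] {p : ℕ} (hp : 1 < p)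
    (I : Ideal R) : tightCl p I ⊆ intCl I := by
  rintro x ⟨c, hc, e₀, hx⟩
  refine mem_intCl_of_forall_minimalPrimes fun P hP => ?_
  have : P.IsPrime := hP.1.1
  refine mem_intCl_of_mul_pow_mem (q := fun i => p ^ (e₀ + i))
    (mem_nonZeroDivisors_of_ne_zero (Ideal.Quotient.eq_zero_iff_mem.not.2 (hc P hP)))
    (fun i j hij => Nat.pow_lt_pow_right hp (by omega)) fun i => ?_
  rw [← Ideal.map_pow, ← map_pow, ← map_mul]
  exact Ideal.mem_map_of_mem _ (idealFrobPow_le_pow _ _ (hx _ (Nat.le_add_right e₀ i)))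

end TightClosure

theorem spTightCl_subset_spIntCl_general
    {R : Type*} [CommRing R] [IsNoetherianRing R] [IsLocalRing R]
    (p : ℕ) [Fact p.Prime]
    (I : Ideal R) :
    spTightCl p I ⊆ spIntCl I := by
  rintro x ⟨e, hx⟩
  have hp : 1 < p := (Fact.out : p.Prime).one_lt
  refine ⟨p ^ e, Nat.one_le_pow _ _ (by omega), ?_⟩
  exact tightCl_subset_intCl hp _ <|
    tightCl_mono p (Ideal.mul_mono_right (idealFrobPow_le_pow I _)) hx

/-- In a Noetherian local ring `(R,m)` of prime characteristic `p`,
for every proper ideal `I`, `I^{*sp} ⊆ I^{-sp}`. -/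
theorem spTightCl_subset_spIntCl
    {R : Type*} [CommRing R] [IsNoetherianRing R] [IsLocalRing R]
    (p : ℕ) [Fact p.Prime] [CharP R p]
    (I : Ideal R) (hI : I ≠ ⊤) :
    spTightCl p I ⊆ spIntCl I :=
  spTightCl_subset_spIntCl_general p I
end
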